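/- Let G = (V, E, γ) be a labeled directed graph and M = (V', E', γ') a motif that is connected and has at least 3 vertices. The map W ↦ φ(W) is a bijection from the collection of non-overlapping sets of embeddings of M in G onto the collection of edge sets 𝓔 ⊆ E satisfying Property 1 (with uniqueness) and Property 2, and under this bijection |φ(W)| = |W| · |E'|. Consequently, the maximum cardinality of a non-overlapping embedding set of M in G equals (1/|E'|) times the maximum cardinality of an edge set 𝓔 ⊆ E satisfying Property 1 (with uniqueness) and Property 2. -/

import Mathlib

/-- The vertex set (set of endpoints) of an edge set `Λ` in a directed graph. -/
def endpts {V : Type*} (Λ : Set (V × V)) : Set V :=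
  {v | ∃ e ∈ Λ, e.1 = v ∨ e.2 = v}

/-- The edge-induced subgraph `G[Λ]` (edges `Λ`, labels `γ`) is isomorphic to the
motif `M = (V', E', γ')`. -/
def IsoToMotif {V V' : Type*} (γ : V × V → Bool) (Λ : Set (V × V))
    (E' : Set (V' × V')) (γ' : V' × V' → Bool) : Prop :=
  ∃ g : ↥(endpts Λ) ≃ V',
    (∀ u v : ↥(endpts Λ), ((u : V), (v : V)) ∈ Λ ↔ (g u, g v) ∈ E') ∧
    (∀ u v : ↥(endpts Λ), ((u : V), (v : V)) ∈ Λ → γ ((u : V), (v : V)) = γ' (g u, g v))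

/-- `Λ` is an embedding of the motif `M = (V', E', γ')` in the graph `G = (V, E, γ)`. -/
def IsEmbedding {V V' : Type*} (E : Set (V × V)) (γ : V × V → Bool)
    (E' : Set (V' × V')) (γ' : V' × V' → Bool) (Λ : Set (V × V)) : Prop :=
  Λ ⊆ E ∧ IsoToMotif γ Λ E' γ'

/-- `W` is a non-overlapping set of embeddings of `M` in `G`. -/
def NonOverlappingSet {V V' : Type*} (E : Set (V × V)) (γ : V × V → Bool)
    (E' : Set (V' × V')) (γ' : V' × V' → Bool) (W : Set (Set (V × V))) : Prop :=
  (∀ Λ ∈ W, IsEmbedding E γ E' γ' Λ) ∧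
  W.Pairwise fun Λ₁ Λ₂ => Disjoint (endpts Λ₁) (endpts Λ₂)

/-- The edge decomposition `φ(W) = ⋃_{Λ ∈ W} Λ`. -/
def edgeDecomp {V : Type*} (W : Set (Set (V × V))) : Set (V × V) := ⋃₀ W

/-- The motif (as a labeled directed graph on the whole vertex type `V'`) is connected,
i.e. the undirected graph obtained by forgetting directions and labels is connected. -/
def MotifConnected {V' : Type*} (E' : Set (V' × V')) : Prop :=
  (SimpleGraph.fromRel fun a b => (a, b) ∈ E' ∨ (b, a) ∈ E').Connected

/-- Property 1 (with uniqueness): every edge of `𝓔` lies in exactly one edge set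
`Λ ⊆ 𝓔` whose induced subgraph is isomorphic to the motif. -/
def Property1 {V V' : Type*} (γ : V × V → Bool) (E' : Set (V' × V'))
    (γ' : V' × V' → Bool) (𝓔 : Set (V × V)) : Prop :=
  ∀ e ∈ 𝓔, ∃! Λ : Set (V × V), e ∈ Λ ∧ Λ ⊆ 𝓔 ∧ IsoToMotif γ Λ E' γ'

/-- Property 2: any two edges of `𝓔` sharing a vertex lie in a common edge set
`Λ ⊆ 𝓔` whose induced subgraph is isomorphic to the motif. -/
def Property2 {V V' : Type*} (γ : V × V → Bool) (E' : Set (V' × V'))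
    (γ' : V' × V' → Bool) (𝓔 : Set (V × V)) : Prop :=
  ∀ e₁ ∈ 𝓔, ∀ e₂ ∈ 𝓔, (({e₁.1, e₁.2} : Set V) ∩ {e₂.1, e₂.2}).Nonempty →
    ∃ Λ : Set (V × V), Λ ⊆ 𝓔 ∧ e₁ ∈ Λ ∧ e₂ ∈ Λ ∧ IsoToMotif γ Λ E' γ'

/-! A non-overlapping family `W` is recovered from `φ(W)` as the set of all copies of the motif
inside it. Indeed, a copy `Λ' ⊆ φ(W)` is connected and the members of `W` are vertex-disjoint, so
the edges of `Λ'` cannot pass from one member to another: `Λ'` lies in a single member `Λ`, and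
having as many edges as `Λ`, it equals `Λ`. This gives injectivity and Property 1 for `φ(W)`.
Conversely, for `𝓔` with Properties 1 and 2 the copies of the motif inside `𝓔` are pairwise
vertex-disjoint: two of them sharing a vertex lie, by Property 2, in one copy containing an edge of
each, which by the uniqueness in Property 1 is both of them. -/

lemma SimpleGraph.Preconnected.constant_of_adj {α β : Type*} {G : SimpleGraph α}
    (hG : G.Preconnected) {f : α → β} (hf : ∀ x y, G.Adj x y → f x = f y) (x y : α) :
    f x = f y := by
  induction (SimpleGraph.reachable_iff_reflTransGen x y).mp (hG x y) with
  | refl => rfl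
  | tail _ hab ih => exact ih.trans (hf _ _ hab)

lemma Set.ncard_sUnion_of_pairwiseDisjoint {α : Type*} [Finite α] {W : Set (Set α)} {k : ℕ}
    (hW : W.PairwiseDisjoint id) (hk : ∀ s ∈ W, s.ncard = k) : (⋃₀ W).ncard = W.ncard * k := by
  rw [Set.sUnion_eq_biUnion]
  refine ((Set.toFinite W).ncard_biUnion (fun _ _ => Set.toFinite _) hW).trans ?_
  rw [finsum_mem_congr rfl fun s hs => (hk s hs : (id s).ncard = k),
    finsum_mem_eq_finite_toFinset_sum _ (Set.toFinite W), Finset.sum_const,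
    smul_eq_mul, Set.ncard_eq_toFinset_card _ (Set.toFinite W)]

section Motif

variable {V V' : Type*} {E : Set (V × V)} {γ : V × V → Bool} {E' : Set (V' × V')}
  {γ' : V' × V' → Bool} {Λ Λ' Λ₁ Λ₂ : Set (V × V)} {W W₁ W₂ : Set (Set (V × V))}

lemma mem_endpts_fst {e : V × V} (he : e ∈ Λ) : e.1 ∈ endpts Λ :=
  ⟨e, he, Or.inl rfl⟩

lemma mem_endpts_snd {e : V × V} (he : e ∈ Λ) : e.2 ∈ endpts Λ :=
  ⟨e, he, Or.inr rfl⟩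

lemma mem_endpts_of_mem_pair {e : V × V} {v : V} (he : e ∈ Λ) (hv : v ∈ ({e.1, e.2} : Set V)) :
    v ∈ endpts Λ :=
  ⟨e, he, hv.imp Eq.symm Eq.symm⟩

namespace IsoToMotif

lemma mk_mem_iff {g : ↥(endpts Λ) ≃ V'}
    (hg : ∀ u v : ↥(endpts Λ), ((u : V), (v : V)) ∈ Λ ↔ (g u, g v) ∈ E') (a b : V') :
    ((g.symm a : V), (g.symm b : V)) ∈ Λ ↔ (a, b) ∈ E' := by
  simpa using hg (g.symm a) (g.symm b)

lemma ncard_eq (h : IsoToMotif γ Λ E' γ') : Λ.ncard = E'.ncard := by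
  obtain ⟨g, hg, -⟩ := h
  exact Set.ncard_congr'
    { toFun := fun e => ⟨(g ⟨_, mem_endpts_fst e.2⟩, g ⟨_, mem_endpts_snd e.2⟩), (hg _ _).mp e.2⟩
      invFun := fun e => ⟨(g.symm e.1.1, g.symm e.1.2), (mk_mem_iff hg _ _).mpr e.2⟩
      left_inv := fun e => by simp
      right_inv := fun e => by simp }

lemma nonempty [Nonempty V'] (h : IsoToMotif γ Λ E' γ') : Λ.Nonempty := by
  obtain ⟨g, -⟩ := h
  obtain ⟨e, he, -⟩ := (g.symm (Classical.arbitrary V')).2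
  exact ⟨e, he⟩

end IsoToMotif

namespace NonOverlappingSet

lemma eq_of_mem_endpts (hW : NonOverlappingSet E γ E' γ' W) (h₁ : Λ₁ ∈ W) (h₂ : Λ₂ ∈ W) {v : V}
    (hv₁ : v ∈ endpts Λ₁) (hv₂ : v ∈ endpts Λ₂) : Λ₁ = Λ₂ :=
  hW.2.eq h₁ h₂ (Set.not_disjoint_iff.mpr ⟨v, hv₁, hv₂⟩)

lemma mem_of_mem_edgeDecomp (hW : NonOverlappingSet E γ E' γ' W) (hΛ : Λ ∈ W) {e : V × V}
    (he : e ∈ edgeDecomp W) (hv : e.1 ∈ endpts Λ ∨ e.2 ∈ endpts Λ) : e ∈ Λ := by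
  obtain ⟨Λ₁, hΛ₁, heΛ₁⟩ := he
  rcases hv with hv | hv
  · exact hW.eq_of_mem_endpts hΛ₁ hΛ (mem_endpts_fst heΛ₁) hv ▸ heΛ₁
  · exact hW.eq_of_mem_endpts hΛ₁ hΛ (mem_endpts_snd heΛ₁) hv ▸ heΛ₁

lemma fst_mem_endpts_iff (hW : NonOverlappingSet E γ E' γ' W) (hΛ : Λ ∈ W) {e : V × V}
    (he : e ∈ edgeDecomp W) : e.1 ∈ endpts Λ ↔ e.2 ∈ endpts Λ :=
  ⟨fun h => mem_endpts_snd (hW.mem_of_mem_edgeDecomp hΛ he (Or.inl h)),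
    fun h => mem_endpts_fst (hW.mem_of_mem_edgeDecomp hΛ he (Or.inr h))⟩

lemma exists_superset_of_iso (hconn : MotifConnected E') (hW : NonOverlappingSet E γ E' γ' W)
    (hsub : Λ' ⊆ edgeDecomp W) (hiso : IsoToMotif γ Λ' E' γ') : ∃ Λ ∈ W, Λ' ⊆ Λ := by
  have := hconn.nonempty
  obtain ⟨g, hg, -⟩ := hiso
  obtain ⟨e₀, he₀, hv₀⟩ := (g.symm (Classical.arbitrary V')).2
  obtain ⟨Λ, hΛ, he₀Λ⟩ := hsub he₀
  have hall : ∀ x, (g.symm x : V) ∈ endpts Λ := by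
    have hconst := hconn.preconnected.constant_of_adj
      (f := fun x => (g.symm x : V) ∈ endpts Λ) fun x y hxy => by
        rcases ((SimpleGraph.fromRel_adj _ _ _).mp hxy).2.elim id Or.symm with h | h
        · exact propext (hW.fst_mem_endpts_iff hΛ (hsub ((IsoToMotif.mk_mem_iff hg x y).mpr h)))
        · exact (propext (hW.fst_mem_endpts_iff hΛ
            (hsub ((IsoToMotif.mk_mem_iff hg y x).mpr h)))).symm
    intro x
    rw [hconst x (Classical.arbitrary V')]
    exact ⟨e₀, he₀Λ, hv₀⟩
  refine ⟨Λ, hΛ, fun e he => hW.mem_of_mem_edgeDecomp hΛ (hsub he) (Or.inl ?_)⟩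
  simpa using hall (g ⟨e.1, mem_endpts_fst he⟩)

lemma mem_of_iso [Finite V] (hconn : MotifConnected E') (hW : NonOverlappingSet E γ E' γ' W)
    (hsub : Λ' ⊆ edgeDecomp W) (hiso : IsoToMotif γ Λ' E' γ') : Λ' ∈ W := by
  obtain ⟨Λ, hΛ, hΛ'Λ⟩ := hW.exists_superset_of_iso hconn hsub hiso
  have hcard : Λ.ncard ≤ Λ'.ncard := by rw [hiso.ncard_eq, (hW.1 Λ hΛ).2.ncard_eq]
  exact Set.eq_of_subset_of_ncard_le hΛ'Λ hcard ▸ hΛ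

lemma subset_of_edgeDecomp_subset [Finite V] (hconn : MotifConnected E')
    (hW₁ : NonOverlappingSet E γ E' γ' W₁) (hW₂ : NonOverlappingSet E γ E' γ' W₂)
    (h : edgeDecomp W₁ ⊆ edgeDecomp W₂) : W₁ ⊆ W₂ := fun Λ hΛ =>
  hW₂.mem_of_iso hconn ((Set.subset_sUnion_of_mem hΛ).trans h) (hW₁.1 Λ hΛ).2

lemma edgeDecomp_subset (hW : NonOverlappingSet E γ E' γ' W) : edgeDecomp W ⊆ E :=
  Set.sUnion_subset fun Λ hΛ => (hW.1 Λ hΛ).1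

lemma property1 [Finite V] (hconn : MotifConnected E') (hW : NonOverlappingSet E γ E' γ' W) :
    Property1 γ E' γ' (edgeDecomp W) := by
  rintro e ⟨Λ, hΛ, heΛ⟩
  refine ⟨Λ, ⟨heΛ, Set.subset_sUnion_of_mem hΛ, (hW.1 Λ hΛ).2⟩, ?_⟩
  rintro Λ' ⟨heΛ', hsub, hiso⟩
  exact hW.eq_of_mem_endpts (hW.mem_of_iso hconn hsub hiso) hΛ (mem_endpts_fst heΛ')
    (mem_endpts_fst heΛ)

lemma property2 (hW : NonOverlappingSet E γ E' γ' W) : Property2 γ E' γ' (edgeDecomp W) := by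
  rintro e₁ ⟨Λ₁, hΛ₁, he₁⟩ e₂ ⟨Λ₂, hΛ₂, he₂⟩ ⟨v, hv₁, hv₂⟩
  obtain rfl := hW.eq_of_mem_endpts hΛ₁ hΛ₂ (mem_endpts_of_mem_pair he₁ hv₁)
    (mem_endpts_of_mem_pair he₂ hv₂)
  exact ⟨Λ₁, Set.subset_sUnion_of_mem hΛ₁, he₁, he₂, (hW.1 Λ₁ hΛ₁).2⟩

lemma pairwiseDisjoint (hW : NonOverlappingSet E γ E' γ' W) : W.PairwiseDisjoint id :=
  fun _ hΛ₁ _ hΛ₂ hne => Set.disjoint_left.mpr fun _ he₁ he₂ =>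
    hne (hW.eq_of_mem_endpts hΛ₁ hΛ₂ (mem_endpts_fst he₁) (mem_endpts_fst he₂))

lemma ncard_edgeDecomp [Finite V] (hW : NonOverlappingSet E γ E' γ' W) :
    (edgeDecomp W).ncard = W.ncard * E'.ncard :=
  Set.ncard_sUnion_of_pairwiseDisjoint hW.pairwiseDisjoint fun Λ hΛ => (hW.1 Λ hΛ).2.ncard_eq

/-- If `E' = ∅` the division is by zero; the identity survives because then `W = ∅`: a copy of
the motif has vertices, hence edges, but only `|E'| = 0` of them. -/
lemma ncard_edgeDecomp_div [Finite V] (hconn : MotifConnected E')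
    (hW : NonOverlappingSet E γ E' γ' W) : (edgeDecomp W).ncard / E'.ncard = W.ncard := by
  rw [hW.ncard_edgeDecomp]
  rcases Nat.eq_zero_or_pos E'.ncard with hk | hk
  · have := hconn.nonempty
    suffices W = ∅ by simp [this]
    refine Set.eq_empty_of_forall_notMem fun Λ hΛ => ?_
    have hiso := (hW.1 Λ hΛ).2
    exact ((Set.ncard_pos (Set.toFinite Λ)).mpr hiso.nonempty).ne' (hiso.ncard_eq.trans hk)
  · exact Nat.mul_div_cancel _ hk

end NonOverlappingSet

def motifCopies (γ : V × V → Bool) (E' : Set (V' × V')) (γ' : V' × V' → Bool)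
    (𝓔 : Set (V × V)) : Set (Set (V × V)) :=
  {Λ | Λ ⊆ 𝓔 ∧ IsoToMotif γ Λ E' γ'}

lemma nonOverlappingSet_motifCopies {𝓔 : Set (V × V)} (hE : 𝓔 ⊆ E) (h₁ : Property1 γ E' γ' 𝓔)
    (h₂ : Property2 γ E' γ' 𝓔) : NonOverlappingSet E γ E' γ' (motifCopies γ E' γ' 𝓔) := by
  refine ⟨fun Λ hΛ => ⟨hΛ.1.trans hE, hΛ.2⟩, fun Λ₁ hΛ₁ Λ₂ hΛ₂ hne => ?_⟩
  refine Set.disjoint_left.mpr fun v ⟨e₁, he₁, hv₁⟩ ⟨e₂, he₂, hv₂⟩ => hne ?_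
  obtain ⟨Λ, hΛ, he₁Λ, he₂Λ, hiso⟩ := h₂ e₁ (hΛ₁.1 he₁) e₂ (hΛ₂.1 he₂)
    ⟨v, hv₁.imp Eq.symm Eq.symm, hv₂.imp Eq.symm Eq.symm⟩
  exact ((h₁ e₁ (hΛ₁.1 he₁)).unique ⟨he₁, hΛ₁.1, hΛ₁.2⟩ ⟨he₁Λ, hΛ, hiso⟩).trans
    ((h₁ e₂ (hΛ₂.1 he₂)).unique ⟨he₂, hΛ₂.1, hΛ₂.2⟩ ⟨he₂Λ, hΛ, hiso⟩).symm

lemma edgeDecomp_motifCopies {𝓔 : Set (V × V)} (h₁ : Property1 γ E' γ' 𝓔) :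
    edgeDecomp (motifCopies γ E' γ' 𝓔) = 𝓔 := by
  refine (Set.sUnion_subset fun Λ hΛ => hΛ.1).antisymm fun e he => ?_
  obtain ⟨Λ, ⟨heΛ, hsub, hiso⟩, -⟩ := h₁ e he
  exact ⟨Λ, ⟨hsub, hiso⟩, heΛ⟩

lemma bijOn_edgeDecomp [Finite V] (hconn : MotifConnected E') :
    Set.BijOn edgeDecomp {W | NonOverlappingSet E γ E' γ' W}
      {𝓔 | 𝓔 ⊆ E ∧ Property1 γ E' γ' 𝓔 ∧ Property2 γ E' γ' 𝓔} :=
  ⟨fun _ hW => ⟨hW.edgeDecomp_subset, hW.property1 hconn, hW.property2⟩,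
    fun _ hW₁ _ hW₂ h => (hW₁.subset_of_edgeDecomp_subset hconn hW₂ h.le).antisymm
      (hW₂.subset_of_edgeDecomp_subset hconn hW₁ h.ge),
    fun _ ⟨hE, h₁, h₂⟩ => ⟨_, nonOverlappingSet_motifCopies hE h₁ h₂, edgeDecomp_motifCopies h₁⟩⟩

end Motif

theorem stmt7_general {V V' : Type*} [Fintype V]
    (E : Set (V × V)) (γ : V × V → Bool)
    (E' : Set (V' × V')) (γ' : V' × V' → Bool)
    (hconn : MotifConnected E') :
    -- `φ` is a bijection from the non-overlapping embedding sets of `M` in `G`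
    -- onto the edge sets `𝓔 ⊆ E` satisfying Property 1 (with uniqueness) and Property 2:
    Set.BijOn edgeDecomp {W | NonOverlappingSet E γ E' γ' W}
      {𝓔 | 𝓔 ⊆ E ∧ Property1 γ E' γ' 𝓔 ∧ Property2 γ E' γ' 𝓔} ∧
    -- under this bijection `|φ(W)| = |W| · |E'|`:
    (∀ W, NonOverlappingSet E γ E' γ' W → (edgeDecomp W).ncard = W.ncard * E'.ncard) ∧
    -- consequently the maximum cardinality of a non-overlapping embedding set equals
    -- `(1/|E'|)` times the maximum cardinality of such an edge set `𝓔`: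
    sSup (Set.ncard '' {W | NonOverlappingSet E γ E' γ' W}) =
      sSup (Set.ncard '' {𝓔 | 𝓔 ⊆ E ∧ Property1 γ E' γ' 𝓔 ∧ Property2 γ E' γ' 𝓔}) /
        E'.ncard := by
  have hbij := bijOn_edgeDecomp (E := E) (γ := γ) (γ' := γ') hconn
  refine ⟨hbij, fun W hW => hW.ncard_edgeDecomp, ?_⟩
  set P := {𝓔 | 𝓔 ⊆ E ∧ Property1 γ E' γ' 𝓔 ∧ Property2 γ E' γ' 𝓔}
  have hempty : ∅ ∈ P := ⟨Set.empty_subset E, by simp [Property1], by simp [Property2]⟩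
  rw [Monotone.map_csSup_of_continuousAt (f := (· / E'.ncard)) (A := Set.ncard '' P)
      continuous_of_discreteTopology.continuousAt (fun _ _ h => Nat.div_le_div_right h)
      ⟨_, _, hempty, rfl⟩ (Set.toFinite _).bddAbove,
    ← hbij.image_eq, Set.image_image, Set.image_image]
  exact congrArg sSup (Set.image_congr fun W hW => (hW.ncard_edgeDecomp_div hconn).symm)

theorem stmt7 {V V' : Type*} [Fintype V] [Fintype V']
    (E : Set (V × V)) (γ : V × V → Bool)
    (E' : Set (V' × V')) (γ' : V' × V' → Bool)
    (hconn : MotifConnected E') (hcard : 3 ≤ Fintype.card V') :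
    -- `φ` is a bijection from the non-overlapping embedding sets of `M` in `G`
    -- onto the edge sets `𝓔 ⊆ E` satisfying Property 1 (with uniqueness) and Property 2:
    Set.BijOn edgeDecomp {W | NonOverlappingSet E γ E' γ' W}
      {𝓔 | 𝓔 ⊆ E ∧ Property1 γ E' γ' 𝓔 ∧ Property2 γ E' γ' 𝓔} ∧
    -- under this bijection `|φ(W)| = |W| · |E'|`:
    (∀ W, NonOverlappingSet E γ E' γ' W → (edgeDecomp W).ncard = W.ncard * E'.ncard) ∧
    -- consequently the maximum cardinality of a non-overlapping embedding set equals
    -- `(1/|E'|)` times the maximum cardinality of such an edge set `𝓔`: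
    sSup (Set.ncard '' {W | NonOverlappingSet E γ E' γ' W}) =
      sSup (Set.ncard '' {𝓔 | 𝓔 ⊆ E ∧ Property1 γ E' γ' 𝓔 ∧ Property2 γ E' γ' 𝓔}) /
        E'.ncard :=
  stmt7_general E γ E' γ' hconn
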